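/- Fix an integer k ≥ 2 and a real σ > 0. For all u, t, t' ∈ {1,…,k}, the privacy ratio P_σ(t,u)/P_σ(t',u) is at most P_σ(1,1)/P_σ(k,1); i.e., the maximum of the ratio over all triples (u,t,t') is attained at u = 1, t = 1, t' = k. Equivalently, P_σ(t,u) · P_σ(k,1) ≤ P_σ(t',u) · P_σ(1,1). -/

import Mathlib

/-!
Since `v ↦ k + 1 - v` is a symmetry of `{1,…,k}`, `C_σ(1) = C_σ(k)` and the claim reduces to
`P_σ(t,u) · Q_σ(k,1) ≤ P_σ(t',u)`, i.e. `Q_σ(t,u) Q_σ(k,1) C_σ(t') ≤ Q_σ(t',u) C_σ(t)`.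
Pairing the term `v` of `C_σ(t')` with the term `k + 1 - v` of `C_σ(t)`, this holds termwise by
the triangle inequality together with `|t - v| + |t - (k + 1 - v)| ≤ k - 1`.
-/

/-- Unnormalized weight of the discrete exponential randomized-response
mechanism on `{1,…,k}`: `Q_σ(t,u) = exp(−|u−t|/(kσ))`. -/
noncomputable def rrWeight (k : ℕ) (σ : ℝ) (t u : ℕ) : ℝ :=
  Real.exp (-|(u : ℝ) - (t : ℝ)| / (k * σ))

/-- Normalizer `C_σ(t) = Σ_{v=1}^k exp(−|v−t|/(kσ))`. -/
noncomputable def rrNorm (k : ℕ) (σ : ℝ) (t : ℕ) : ℝ :=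
  ∑ v ∈ Finset.Icc 1 k, rrWeight k σ t v

/-- Randomization probability `P_σ(t,u) = Q_σ(t,u) / C_σ(t)`. -/
noncomputable def rrProb (k : ℕ) (σ : ℝ) (t u : ℕ) : ℝ :=
  rrWeight k σ t u / rrNorm k σ t

open Finset

theorem Finset.sum_Icc_one_reflect {M : Type*} [AddCommMonoid M] (k : ℕ) (f : ℕ → M) :
    ∑ v ∈ Icc 1 k, f (k + 1 - v) = ∑ v ∈ Icc 1 k, f v := by
  refine sum_nbij' (fun v => k + 1 - v) (fun v => k + 1 - v) ?_ ?_ ?_ ?_ fun _ _ => rfl <;>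
    simp only [mem_Icc] <;> intro v hv <;> omega

theorem abs_sub_add_abs_sub_reflect_le {a b t x : ℝ} (ht : t ∈ Set.Icc a b)
    (hx : x ∈ Set.Icc a b) : |t - x| + |t - (a + b - x)| ≤ b - a := by
  obtain ⟨hat, htb⟩ := ht
  obtain ⟨hax, hxb⟩ := hx
  rcases abs_cases (t - x) with ⟨h₁, _⟩ | ⟨h₁, _⟩ <;>
    rcases abs_cases (t - (a + b - x)) with ⟨h₂, _⟩ | ⟨h₂, _⟩ <;> linarith

theorem abs_sub_add_abs_reflect_sub_le {k t v u t' : ℝ} (ht : t ∈ Set.Icc 1 k)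
    (hv : v ∈ Set.Icc 1 k) :
    |u - t'| + |(k + 1 - v) - t| ≤ |u - t| + (k - 1) + |v - t'| := by
  have hreflect := abs_sub_add_abs_sub_reflect_le ht hv
  rw [add_comm 1 k] at hreflect
  rw [abs_sub_comm (k + 1 - v) t]
  linarith [abs_sub_le u t t', abs_sub_le t v t', abs_sub_comm t' v]

theorem Nat.cast_reflect {R : Type*} [AddGroupWithOne R] {k v : ℕ} (hv : v ≤ k + 1) :
    ((k + 1 - v : ℕ) : R) = k + 1 - v := by
  rw [Nat.cast_sub hv, Nat.cast_add_one]

section RandomizedResponse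

variable {k : ℕ} {σ : ℝ}

theorem rrWeight_pos (t u : ℕ) : 0 < rrWeight k σ t u :=
  Real.exp_pos _

theorem rrWeight_self (t : ℕ) : rrWeight k σ t t = 1 := by
  simp [rrWeight]

theorem rrWeight_reflect {t v : ℕ} (ht : t ≤ k + 1) (hv : v ≤ k + 1) :
    rrWeight k σ (k + 1 - t) (k + 1 - v) = rrWeight k σ t v := by
  rw [rrWeight, rrWeight, Nat.cast_reflect ht, Nat.cast_reflect hv, ← abs_neg]
  ring_nf

theorem rrNorm_pos (hk : 1 ≤ k) (t : ℕ) : 0 < rrNorm k σ t :=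
  sum_pos (fun v _ => rrWeight_pos t v) ⟨1, mem_Icc.mpr ⟨le_rfl, hk⟩⟩

theorem rrNorm_reflect {t : ℕ} (ht : t ≤ k + 1) : rrNorm k σ (k + 1 - t) = rrNorm k σ t := by
  rw [rrNorm, ← sum_Icc_one_reflect]
  refine sum_congr rfl fun v hv => rrWeight_reflect ht ?_
  linarith [(mem_Icc.mp hv).2]

theorem rrNorm_last_eq_one : rrNorm k σ k = rrNorm k σ 1 := by
  simpa using rrNorm_reflect (k := k) (σ := σ) (t := 1) (by omega)

theorem rrWeight_mul_rrWeight_last_mul_le (hσ : 0 < σ) {u t t' v : ℕ} (ht : t ∈ Icc 1 k)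
    (hv : v ∈ Icc 1 k) :
    rrWeight k σ t u * rrWeight k σ k 1 * rrWeight k σ t' v ≤
      rrWeight k σ t' u * rrWeight k σ t (k + 1 - v) := by
  have hvk : v ≤ k + 1 := by simp only [mem_Icc] at hv; omega
  simp only [mem_Icc, ← Nat.one_le_cast (α := ℝ), ← Nat.cast_le (α := ℝ)] at ht hv
  have hk : (1 : ℝ) ≤ k := ht.1.trans ht.2
  have hexponent := abs_sub_add_abs_reflect_sub_le (u := (u : ℝ)) (t' := (t' : ℝ)) ht hv
  have hlast : |((1 : ℕ) : ℝ) - k| = k - 1 := by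
    rw [Nat.cast_one, abs_sub_comm, abs_of_nonneg (sub_nonneg.mpr hk)]
  simp only [rrWeight, ← Real.exp_add, Real.exp_le_exp, hlast, Nat.cast_reflect hvk, neg_div,
    ← neg_add, ← add_div, neg_le_neg_iff]
  exact div_le_div_of_nonneg_right hexponent (by positivity)

theorem rrProb_mul_rrWeight_last_le (hσ : 0 < σ) {u t : ℕ} (ht : t ∈ Icc 1 k) (t' : ℕ) :
    rrProb k σ t u * rrWeight k σ k 1 ≤ rrProb k σ t' u := by
  have hk : 1 ≤ k := (mem_Icc.mp ht).1.trans (mem_Icc.mp ht).2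
  have hpaired : rrWeight k σ t u * rrWeight k σ k 1 * rrNorm k σ t' ≤
      rrWeight k σ t' u * rrNorm k σ t := by
    rw [rrNorm, rrNorm, ← sum_Icc_one_reflect k (rrWeight k σ t), mul_sum, mul_sum]
    exact sum_le_sum fun v hv => rrWeight_mul_rrWeight_last_mul_le hσ ht hv
  rw [rrProb, rrProb, div_mul_eq_mul_div, div_le_div_iff₀ (rrNorm_pos hk t) (rrNorm_pos hk t')]
  linarith

end RandomizedResponse

theorem rr_ratio_extremal_general (k : ℕ) (σ : ℝ) (hσ : 0 < σ) :
    ∀ u ∈ Finset.Icc 1 k, ∀ t ∈ Finset.Icc 1 k, ∀ t' ∈ Finset.Icc 1 k,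
      rrProb k σ t u * rrProb k σ k 1 ≤ rrProb k σ t' u * rrProb k σ 1 1 := by
  intro u _ t ht t' _
  have hC : 0 < rrNorm k σ 1 := rrNorm_pos ((mem_Icc.mp ht).1.trans (mem_Icc.mp ht).2) 1
  calc rrProb k σ t u * rrProb k σ k 1
      = rrProb k σ t u * rrWeight k σ k 1 / rrNorm k σ 1 := by
        rw [rrProb.eq_1 k σ k 1, rrNorm_last_eq_one, mul_div_assoc]
    _ ≤ rrProb k σ t' u / rrNorm k σ 1 :=
        div_le_div_of_nonneg_right (rrProb_mul_rrWeight_last_le hσ ht t') hC.le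
    _ = rrProb k σ t' u * rrProb k σ 1 1 := by
        rw [rrProb.eq_1 k σ 1 1, rrWeight_self, div_eq_mul_one_div]

/-- the privacy ratio `P_σ(t,u)/P_σ(t',u)` is maximized at
`u = 1, t = 1, t' = k`; equivalently
`P_σ(t,u) · P_σ(k,1) ≤ P_σ(t',u) · P_σ(1,1)`. -/
theorem rr_ratio_extremal (k : ℕ) (hk : 2 ≤ k) (σ : ℝ) (hσ : 0 < σ) :
    ∀ u ∈ Finset.Icc 1 k, ∀ t ∈ Finset.Icc 1 k, ∀ t' ∈ Finset.Icc 1 k,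
      rrProb k σ t u * rrProb k σ k 1 ≤ rrProb k σ t' u * rrProb k σ 1 1 :=
  rr_ratio_extremal_general k σ hσ
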